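/- Let Ω ⊆ ℝ^d be an open set of finite Lebesgue measure, let η ∈ C_c^∞(ℝ^d;ℝ^d), and let Φ be the flow of η. Then the function t ↦ |Φ_t(Ω)| is differentiable at t = 0 and (d/dt)|_{t=0} |Φ_t(Ω)| = ∫_Ω div η(x) dx. -/

import Mathlib

open MeasureTheory

/-- The divergence of a vector field on `ℝ^d`: the trace of its Jacobian. -/
noncomputable def vdiv {d : ℕ} (η : EuclideanSpace ℝ (Fin d) → EuclideanSpace ℝ (Fin d))
    (x : EuclideanSpace ℝ (Fin d)) : ℝ :=
  LinearMap.trace ℝ (EuclideanSpace ℝ (Fin d)) (fderiv ℝ η x).toLinearMap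

/-!
By the change of variables formula, `|Φ_t(Ω)| = ∫_Ω |J t x| dx` with `J t x = det DΦ_t(x)`.
Since `Φ_t` is the identity off the compact set `supp η`, `J t = 1` there, and `J 0 = 1`;
by compactness `J t > 0` for small `t`, and `∂ₜJ` is bounded and vanishes off `supp η`, so one
may differentiate under the integral sign. Finally `∂ₜ DΦ_t(x) = Dη(x)` at `t = 0` (exchange
`∂ₜ` and `Dₓ` in `∂ₜΦ = η ∘ Φ`), and the derivative of `det` at the identity is the trace.
-/

open Set Filter Topology Function

namespace ContinuousLinearMap

variable {𝕜 E : Type*} [NontriviallyNormedField 𝕜] [NormedAddCommGroup E] [NormedSpace 𝕜 E]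
  [FiniteDimensional 𝕜 E]

theorem contDiff_det [CompleteSpace 𝕜] {n : WithTop ℕ∞} :
    ContDiff 𝕜 n (fun f : E →L[𝕜] E => f.det) := by
  let b := Module.finBasis 𝕜 E
  have hentry : ∀ i j, ContDiff 𝕜 n (fun f : E →L[𝕜] E => LinearMap.toMatrix b b f i j) :=
    fun i j => (((Matrix.entryLinearMap 𝕜 𝕜 i j).comp
      ((LinearMap.toMatrix b b).toLinearMap.comp (coeLM 𝕜))).toContinuousLinearMap).contDiff
  have hdet : (fun f : E →L[𝕜] E => f.det) =
      fun f : E →L[𝕜] E =>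
        ∑ σ : Equiv.Perm (Fin _), Equiv.Perm.sign σ • ∏ i, LinearMap.toMatrix b b f (σ i) i := by
    funext f
    rw [det, ← LinearMap.det_toMatrix b, Matrix.det_apply]
  rw [hdet]
  exact ContDiff.sum fun σ _ => (contDiff_prod fun i _ => hentry (σ i) i).const_smul _

theorem hasDerivAt_det_one_add_smul (B : E →L[𝕜] E) :
    HasDerivAt (fun r : 𝕜 => (1 + r • B).det) (LinearMap.trace 𝕜 E B) 0 := by
  let b := Module.finBasis 𝕜 E
  set M := LinearMap.toMatrix b b B
  set P := (1 + (Polynomial.X : Polynomial 𝕜) • M.map Polynomial.C).det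
  have hP : ∀ r : 𝕜, P.eval r = (1 + r • B).det := by
    intro r
    rw [det, ← LinearMap.det_toMatrix b, ← Polynomial.coe_evalRingHom, RingHom.map_det]
    congr 1
    ext i j
    simp only [RingHom.mapMatrix_apply, Polynomial.coe_evalRingHom, Matrix.map_apply,
      Matrix.add_apply, Matrix.one_apply, Matrix.smul_apply, smul_eq_mul, Polynomial.X_mul_C,
      apply_ite, Polynomial.eval_one, Polynomial.eval_zero, Polynomial.eval_mul, Polynomial.eval_C,
      Polynomial.eval_X, toLinearMap_add, toLinearMap_one, toLinearMap_smul, map_add,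
      LinearMap.toMatrix_one, map_smul, add_right_inj, M]
    ring
  have := P.hasDerivAt 0
  rw [Matrix.derivative_det_one_add_X_smul, ← LinearMap.trace_eq_matrix_trace] at this
  exact this.congr_of_eventuallyEq (Eventually.of_forall fun r => (hP r).symm)

end ContinuousLinearMap

theorem HasDerivAt.det_of_eq_one {𝕜 E : Type*} [NontriviallyNormedField 𝕜] [CompleteSpace 𝕜]
    [NormedAddCommGroup E] [NormedSpace 𝕜 E] [FiniteDimensional 𝕜 E] {N : 𝕜 → E →L[𝕜] E}
    {N' : E →L[𝕜] E} {t : 𝕜} (hN : HasDerivAt N N' t) (h1 : N t = 1) :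
    HasDerivAt (fun s => (N s).det) (LinearMap.trace 𝕜 E N') t := by
  have hdet : HasFDerivAt (fun f : E →L[𝕜] E => f.det)
      (fderiv 𝕜 (fun f : E →L[𝕜] E => f.det) 1) 1 :=
    (ContinuousLinearMap.contDiff_det.differentiable (n := 1) one_ne_zero 1).hasFDerivAt
  have hline : HasDerivAt (fun r : 𝕜 => 1 + r • N') N' 0 := by
    simpa using ((hasDerivAt_id (0 : 𝕜)).smul_const N').const_add 1
  have htrace := (ContinuousLinearMap.hasDerivAt_det_one_add_smul N').unique
    (hdet.comp_hasDerivAt_of_eq (0 : 𝕜) hline (by simp))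
  rw [htrace]
  exact hdet.comp_hasDerivAt_of_eq t hN h1.symm

theorem eventually_forall_pos_of_eq_off_compact {X Y : Type*} [TopologicalSpace X]
    [TopologicalSpace Y] {f : X → Y → ℝ} {x₀ : X} {K : Set Y} (hf : Continuous (uncurry f))
    (hK : IsCompact K) (hpos : ∀ y, 0 < f x₀ y) (hfK : ∀ x, ∀ y ∉ K, f x y = f x₀ y) :
    ∀ᶠ x in 𝓝 x₀, ∀ y, 0 < f x y := by
  filter_upwards [hK.eventually_forall_of_forall_eventually (P := fun x y => 0 < f x y)
    fun y _ => hf.continuousAt.eventually (lt_mem_nhds (hpos y))] with x hx y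
  by_cases hy : y ∈ K
  · exact hx y hy
  · exact hfK x y hy ▸ hpos y

theorem hasDerivAt_integral_of_eq_off_compact {E : Type*} [NormedAddCommGroup E]
    [NormedSpace ℝ E] [MeasurableSpace E] [OpensMeasurableSpace E] {μ : Measure E}
    [IsFiniteMeasure μ] {f : ℝ → E → ℝ} {K : Set E} {t₀ : ℝ} (hf : ContDiff ℝ 1 (uncurry f))
    (hK : IsCompact K) (hfK : ∀ t, ∀ x ∉ K, f t x = f t₀ x) (hint : Integrable (f t₀) μ) :
    HasDerivAt (fun t => ∫ x, f t x ∂μ) (∫ x, deriv (f · x) t₀ ∂μ) t₀ := by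
  set f' : ℝ → E → ℝ := fun t x => fderiv ℝ (uncurry f) (t, x) (1, 0)
  have hf' : Continuous (uncurry f') :=
    (ContinuousLinearMap.apply ℝ ℝ ((1 : ℝ), (0 : E))).continuous.comp
      (hf.continuous_fderiv one_ne_zero)
  have hderiv : ∀ t x, HasDerivAt (f · x) (f' t x) t := fun t x =>
    ((hf.differentiable one_ne_zero (t, x)).hasFDerivAt.comp_hasDerivAt (l := uncurry f) t
      ((hasDerivAt_id t).prodMk (hasDerivAt_const t x)))
  have hf'K : ∀ t, ∀ x ∉ K, f' t x = 0 := fun t x hx =>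
    (hderiv t x).unique (by simpa only [hfK _ x hx] using hasDerivAt_const t (f t₀ x))
  obtain ⟨C, hC⟩ := ((isCompact_closedBall t₀ 1).prod hK).exists_bound_of_continuousOn
    hf'.continuousOn
  have hbound : ∀ x, ∀ t ∈ Metric.ball t₀ 1, ‖f' t x‖ ≤ max C 0 := by
    intro x t ht
    by_cases hx : x ∈ K
    · exact le_max_of_le_left (hC (t, x) ⟨Metric.ball_subset_closedBall ht, hx⟩)
    · simp [hf'K t x hx]
  have hmeas : ∀ t, AEStronglyMeasurable (f t) μ := fun t =>
    (hf.continuous.comp (continuous_const.prodMk continuous_id)).aestronglyMeasurable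
  have := (hasDerivAt_integral_of_dominated_loc_of_deriv_le (Metric.ball_mem_nhds t₀ one_pos)
    (Eventually.of_forall hmeas) hint
    (hf'.comp (continuous_const.prodMk continuous_id)).aestronglyMeasurable
    (Eventually.of_forall hbound) (integrable_const _)
    (Eventually.of_forall fun x t _ => hderiv t x)).2
  simpa only [fun x => (hderiv t₀ x).deriv] using this

theorem toReal_addHaar_image_eq_integral_det {E : Type*} [NormedAddCommGroup E]
    [NormedSpace ℝ E] [FiniteDimensional ℝ E] [MeasurableSpace E] [BorelSpace E]
    (μ : Measure E) [μ.IsAddHaarMeasure] {f : E → E} {s : Set E} (hs : MeasurableSet s)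
    (hf : Differentiable ℝ f) (hinj : InjOn f s) (hpos : ∀ x ∈ s, 0 < (fderiv ℝ f x).det) :
    (μ (f '' s)).toReal = ∫ x in s, (fderiv ℝ f x).det ∂μ := by
  have := integral_image_eq_integral_abs_det_fderiv_smul μ hs
    (fun x _ => (hf x).hasFDerivAt.hasFDerivWithinAt) hinj (fun _ => (1 : ℝ))
  simp only [integral_const, smul_eq_mul, mul_one, measureReal_restrict_apply_univ] at this
  rw [← measureReal_def, this]
  exact setIntegral_congr_fun hs fun x hx => abs_of_pos (hpos x hx)

section Flow

variable {E : Type*} [NormedAddCommGroup E] [NormedSpace ℝ E] {η : E → E} {Φ : ℝ → E → E}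

theorem flow_injective {C : NNReal} (hη : LipschitzWith C η) (hΦ0 : ∀ x, Φ 0 x = x)
    (hΦt : ∀ t x, HasDerivAt (fun s => Φ s x) (η (Φ t x)) t) (t : ℝ) : Injective (Φ t) := by
  intro x y hxy
  have := ODE_solution_unique_univ (v := fun _ => η) (s := fun _ => univ) (t₀ := t)
    (fun _ => hη.lipschitzOnWith) (fun s => ⟨hΦt s x, trivial⟩) (fun s => ⟨hΦt s y, trivial⟩)
    hxy
  simpa [hΦ0] using congrFun this 0

theorem flow_apply_eq_self_of_eq_zero {C : NNReal} (hη : LipschitzWith C η)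
    (hΦ0 : ∀ x, Φ 0 x = x) (hΦt : ∀ t x, HasDerivAt (fun s => Φ s x) (η (Φ t x)) t) {x : E}
    (hx : η x = 0) (t : ℝ) :
    Φ t x = x :=
  congrFun (ODE_solution_unique_univ (v := fun _ => η) (s := fun _ => univ) (t₀ := 0)
    (g := fun _ => x) (fun _ => hη.lipschitzOnWith) (fun s => ⟨hΦt s x, trivial⟩)
    (fun s => ⟨by simpa [hx] using hasDerivAt_const s x, trivial⟩) (hΦ0 x)) t

theorem fderiv_flow_eq_one_of_notMem_tsupport {C : NNReal} (hη : LipschitzWith C η)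
    (hΦ0 : ∀ x, Φ 0 x = x) (hΦt : ∀ t x, HasDerivAt (fun s => Φ s x) (η (Φ t x)) t) {x : E}
    (hx : x ∉ tsupport η) (t : ℝ) : fderiv ℝ (Φ t) x = 1 := by
  have hid : Φ t =ᶠ[𝓝 x] id :=
    eventually_of_mem ((isClosed_tsupport η).isOpen_compl.mem_nhds hx) fun y hy =>
      flow_apply_eq_self_of_eq_zero hη hΦ0 hΦt (image_eq_zero_of_notMem_tsupport hy) t
  rw [hid.fderiv_eq, fderiv_id]
  rfl

theorem fderiv_flow_zero (hΦ0 : ∀ x, Φ 0 x = x) (x : E) : fderiv ℝ (Φ 0) x = 1 := by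
  rw [show Φ 0 = id from funext hΦ0, fderiv_id]
  rfl

theorem hasDerivAt_fderiv_flow (hΦ : ContDiff ℝ 2 (uncurry Φ)) (hη : Differentiable ℝ η)
    (hΦt : ∀ t x, HasDerivAt (fun s => Φ s x) (η (Φ t x)) t) (t : ℝ) (x : E) :
    HasDerivAt (fun s => fderiv ℝ (Φ s) x) ((fderiv ℝ η (Φ t x)).comp (fderiv ℝ (Φ t) x)) t := by
  set DG := fderiv ℝ (uncurry Φ)
  have hG : Differentiable ℝ (uncurry Φ) := hΦ.differentiable two_ne_zero
  have hDG : Differentiable ℝ DG :=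
    (hΦ.fderiv_right one_add_one_eq_two.le).differentiable one_ne_zero
  have hslice : ∀ s y, fderiv ℝ (Φ s) y = (DG (s, y)).comp (.inr ℝ ℝ E) := fun s y =>
    ((hG (s, y)).hasFDerivAt.comp y (hasFDerivAt_prodMk_right s y)).fderiv
  have htime : ∀ p, DG p (1, 0) = η (uncurry Φ p) := fun p =>
    ((hG p).hasFDerivAt.comp_hasDerivAt (l := uncurry Φ) p.1
      ((hasDerivAt_id p.1).prodMk (hasDerivAt_const p.1 p.2))).unique (hΦt p.1 p.2)
  -- differentiate `htime` in space and swap the two derivatives by symmetry of `D²(uncurry Φ)`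
  have hmixed : (fderiv ℝ DG (t, x) (1, 0)).comp (.inr ℝ ℝ E) =
      (fderiv ℝ η (Φ t x)).comp (fderiv ℝ (Φ t) x) := by
    have happly : HasFDerivAt (fun p => DG p (1, 0))
        ((ContinuousLinearMap.apply ℝ E ((1 : ℝ), (0 : E))).comp (fderiv ℝ DG (t, x))) (t, x) :=
      (ContinuousLinearMap.apply ℝ E ((1 : ℝ), (0 : E))).hasFDerivAt.comp (t, x)
        (hDG (t, x)).hasFDerivAt
    have hcomp : HasFDerivAt (fun p => DG p (1, 0))
        ((fderiv ℝ η (Φ t x)).comp (DG (t, x))) (t, x) := by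
      rw [funext htime]
      exact (hη (Φ t x)).hasFDerivAt.comp (t, x) (hG (t, x)).hasFDerivAt
    have hsymm : IsSymmSndFDerivAt ℝ (uncurry Φ) (t, x) :=
      hΦ.contDiffAt.isSymmSndFDerivAt (by simp [minSmoothness_of_isRCLikeNormedField])
    ext1 v
    have := congrArg (· ((0 : ℝ), v)) (happly.unique hcomp)
    simp only [ContinuousLinearMap.comp_apply, ContinuousLinearMap.apply_apply] at this
    simp only [ContinuousLinearMap.comp_apply, ContinuousLinearMap.inr_apply, hslice]
    rw [hsymm, this]
  have hcurve : HasDerivAt (fun s => DG (s, x)) (fderiv ℝ DG (t, x) (1, 0)) t :=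
    (hDG _).hasFDerivAt.comp_hasDerivAt t ((hasDerivAt_id t).prodMk (hasDerivAt_const t x))
  rw [← hmixed, funext fun s => hslice s x]
  simpa using hcurve.clm_comp (hasDerivAt_const t (.inr ℝ ℝ E))

theorem contDiff_uncurry_det_fderiv [FiniteDimensional ℝ E] {n : WithTop ℕ∞}
    (hΦ : ContDiff ℝ (n + 1) (uncurry Φ)) :
    ContDiff ℝ n (uncurry fun t x => (fderiv ℝ (Φ t) x).det) :=
  ContinuousLinearMap.contDiff_det.comp
    ((hΦ.comp (contDiff_fst.fst.prodMk contDiff_snd)).fderiv (f := fun p y => Φ p.1 y)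
      contDiff_snd le_rfl)

theorem hasDerivAt_det_fderiv_flow_zero [FiniteDimensional ℝ E] (hΦ : ContDiff ℝ 2 (uncurry Φ))
    (hη : Differentiable ℝ η) (hΦ0 : ∀ x, Φ 0 x = x)
    (hΦt : ∀ t x, HasDerivAt (fun s => Φ s x) (η (Φ t x)) t) (x : E) :
    HasDerivAt (fun t => (fderiv ℝ (Φ t) x).det) (LinearMap.trace ℝ E (fderiv ℝ η x)) 0 := by
  have := (hasDerivAt_fderiv_flow hΦ hη hΦt 0 x).det_of_eq_one (fderiv_flow_zero hΦ0 x)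
  rwa [fderiv_flow_zero hΦ0, hΦ0, ContinuousLinearMap.one_def, ContinuousLinearMap.comp_id]
    at this

end Flow

theorem stmt_3 {d : ℕ} (Ω : Set (EuclideanSpace ℝ (Fin d))) (hΩ : IsOpen Ω)
    (hvol : volume Ω < ⊤)
    (η : EuclideanSpace ℝ (Fin d) → EuclideanSpace ℝ (Fin d))
    (hη : ContDiff ℝ (⊤ : ℕ∞) η) (hηc : HasCompactSupport η)
    (Φ : ℝ → EuclideanSpace ℝ (Fin d) → EuclideanSpace ℝ (Fin d))
    (hΦ : ContDiff ℝ (⊤ : ℕ∞) (fun p : ℝ × EuclideanSpace ℝ (Fin d) => Φ p.1 p.2))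
    (hΦ0 : ∀ x, Φ 0 x = x)
    (hΦt : ∀ t x, HasDerivAt (fun s => Φ s x) (η (Φ t x)) t) :
    HasDerivAt (fun t : ℝ => (volume (Φ t '' Ω)).toReal) (∫ x in Ω, vdiv η x) 0 := by
  obtain ⟨C, hC⟩ := hη.lipschitzWith_of_hasCompactSupport hηc (by simp)
  have hΦ2 : ContDiff ℝ 2 (uncurry Φ) := hΦ.of_le (WithTop.coe_le_coe.2 le_top)
  set J : ℝ → EuclideanSpace ℝ (Fin d) → ℝ := fun t x => (fderiv ℝ (Φ t) x).det
  have hJ : ContDiff ℝ 1 (uncurry J) := contDiff_uncurry_det_fderiv hΦ2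
  have hJ0 : ∀ x, J 0 x = 1 := by simp [J, fderiv_flow_zero hΦ0, ContinuousLinearMap.det]
  have hJK : ∀ t, ∀ x ∉ tsupport η, J t x = J 0 x := fun t x hx => by
    simp [J, fderiv_flow_eq_one_of_notMem_tsupport hC hΦ0 hΦt hx]
  have hvol_eq : ∀ᶠ t in 𝓝 0, (volume (Φ t '' Ω)).toReal = ∫ x in Ω, J t x := by
    filter_upwards [eventually_forall_pos_of_eq_off_compact hJ.continuous hηc
      (by simp [hJ0]) hJK] with t ht
    exact toReal_addHaar_image_eq_integral_det volume hΩ.measurableSet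
      ((hΦ2.comp (contDiff_const.prodMk contDiff_id)).differentiable two_ne_zero)
      (flow_injective hC hΦ0 hΦt t).injOn fun x _ => ht x
  have : IsFiniteMeasure (volume.restrict Ω) := ⟨by simpa using hvol⟩
  have hint := hasDerivAt_integral_of_eq_off_compact (μ := volume.restrict Ω) hJ hηc hJK
    (by rw [funext hJ0]; exact integrable_const 1)
  have hdiv : ∀ x, deriv (J · x) 0 = vdiv η x := fun x =>
    (hasDerivAt_det_fderiv_flow_zero hΦ2 (hη.differentiable (by simp)) hΦ0 hΦt x).deriv
  simp only [hdiv] at hint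
  exact hint.congr_of_eventuallyEq hvol_eq
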